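/- arXiv:2304.01475 — 3 statements merged into one kernel-verified Lean document; each statement's English description precedes it below -/
import Mathlib

section
/- For every robustness tree T over a type X, every real k > 0 and every subset S ⊆ X, the original problem and its robustness decomposition have the same global optimum: the real infimum of the set {V̄_k(T,x) : x ∈ S and V̄_k(T,x) ≤ 0} equals the real infimum of the set {s ∈ ℝ : ∃ x ∈ S, s ≤ 0 and Dec_k(T,x,s)}. -/
/-- The smoothed minimum of two reals (log-sum-exp under-approximation). -/
noncomputable def smin (k a b : ℝ) : ℝ :=
  -(1 / k) * Real.log (Real.exp (-k * a) + Real.exp (-k * b))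

/-- A robustness tree: leaves are predicates, `maxN` are conjunction-like nodes,
`minN` are disjunction-like nodes. -/
inductive RTree (X : Type*) where
  | leaf : (X → ℝ) → RTree X
  | maxN : RTree X → RTree X → RTree X
  | minN : RTree X → RTree X → RTree X

/-- The smoothed (reversed) robustness value of a tree. -/
noncomputable def sVal {X : Type*} (k : ℝ) : RTree X → X → ℝ
  | RTree.leaf g, x => g x
  | RTree.maxN t1 t2, x => max (sVal k t1 x) (sVal k t2 x)
  | RTree.minN t1 t2, x => smin k (sVal k t1 x) (sVal k t2 x)

/-- The decomposed-feasibility predicate of the robustness decomposition. -/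
def Dec {X : Type*} (k : ℝ) : RTree X → X → ℝ → Prop
  | RTree.leaf g, x, s => g x ≤ s
  | RTree.maxN t1 t2, x, s => Dec k t1 x s ∧ Dec k t2 x s
  | RTree.minN t1 t2, x, s =>
      ∃ s1 s2 : ℝ, Dec k t1 x s1 ∧ Dec k t2 x s2 ∧ smin k s1 s2 ≤ s

/-! Since `max` and `smin k` are monotone in both arguments, `Dec k T x s` holds exactly when
`sVal k T x ≤ s`. Every feasible value of the original problem is thus feasible for the
decomposition, and every feasible value of the decomposition lies above one of the original, so
the two infima agree. -/

lemma log_exp_add_exp_le_log_exp_add_exp {u v u' v' : ℝ} (hu : u ≤ u') (hv : v ≤ v') :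
    Real.log (Real.exp u + Real.exp v) ≤ Real.log (Real.exp u' + Real.exp v') :=
  Real.log_le_log (by positivity) (add_le_add (Real.exp_le_exp.mpr hu) (Real.exp_le_exp.mpr hv))

lemma smin_le_smin (k : ℝ) {a b a' b' : ℝ} (ha : a ≤ a') (hb : b ≤ b') :
    smin k a b ≤ smin k a' b' := by
  unfold smin
  rcases le_total 0 k with hk | hk
  · refine mul_le_mul_of_nonpos_left (log_exp_add_exp_le_log_exp_add_exp ?_ ?_) (by simpa)
    all_goals nlinarith
  · refine mul_le_mul_of_nonneg_left (log_exp_add_exp_le_log_exp_add_exp ?_ ?_)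
      (by simpa using hk)
    all_goals nlinarith

theorem dec_iff_sVal_le {X : Type*} (k : ℝ) (T : RTree X) (x : X) (s : ℝ) :
    Dec k T x s ↔ sVal k T x ≤ s := by
  induction T generalizing s with
  | leaf g => rfl
  | maxN t1 t2 ih1 ih2 => simp only [Dec, sVal, ih1, ih2, max_le_iff]
  | minN t1 t2 ih1 ih2 =>
    simp only [Dec, sVal, ih1, ih2]
    constructor
    · rintro ⟨s1, s2, h1, h2, h⟩
      exact (smin_le_smin k h1 h2).trans h
    · intro h
      exact ⟨_, _, le_rfl, le_rfl, h⟩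

theorem decomposition_same_global_optimum_general {X : Type*} (T : RTree X) (k : ℝ)
    (S : Set X) :
    sInf {v : ℝ | ∃ x ∈ S, sVal k T x ≤ 0 ∧ v = sVal k T x} =
      sInf {s : ℝ | ∃ x ∈ S, s ≤ 0 ∧ Dec k T x s} := by
  simp only [dec_iff_sVal_le]
  apply csInf_eq_csInf_of_forall_exists_le
  · rintro v ⟨x, hx, hv, rfl⟩
    exact ⟨_, ⟨x, hx, hv, le_rfl⟩, le_rfl⟩
  · rintro s ⟨x, hx, hs, hxs⟩
    exact ⟨_, ⟨x, hx, hxs.trans hs, rfl⟩, hxs⟩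

theorem decomposition_same_global_optimum {X : Type*} (T : RTree X) (k : ℝ) (hk : 0 < k)
    (S : Set X) :
    sInf {v : ℝ | ∃ x ∈ S, sVal k T x ≤ 0 ∧ v = sVal k T x} =
      sInf {s : ℝ | ∃ x ∈ S, s ≤ 0 ∧ Dec k T x s} :=
  decomposition_same_global_optimum_general T k S
end

section
/- For every robustness tree T over a type X, every real k > 0 and every x ∈ X, the smoothed value under-approximates the exact value: V̄_k(T, x) ≤ V(T, x). -/
/-- The exact (non-smoothed) robustness value of a tree. -/
noncomputable def eVal {X : Type*} : RTree X → X → ℝ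
  | RTree.leaf g, x => g x
  | RTree.maxN t1 t2, x => max (eVal t1 x) (eVal t2 x)
  | RTree.minN t1 t2, x => min (eVal t1 x) (eVal t2 x)

/-- The min-depth of a robustness tree. -/
def mdepth {X : Type*} : RTree X → ℕ
  | RTree.leaf _ => 0
  | RTree.maxN t1 t2 => max (mdepth t1) (mdepth t2)
  | RTree.minN t1 t2 => 1 + max (mdepth t1) (mdepth t2)


theorem smin_comm (k a b : ℝ) : smin k a b = smin k b a := by
  rw [smin, smin, add_comm]

theorem smin_le_left {k : ℝ} (hk : 0 < k) (a b : ℝ) : smin k a b ≤ a := by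
  have hlog : -k * a ≤ Real.log (Real.exp (-k * a) + Real.exp (-k * b)) :=
    (Real.le_log_iff_exp_le (by positivity)).2 (le_add_of_nonneg_right (Real.exp_pos _).le)
  rw [smin, neg_mul, neg_le, one_div, le_inv_mul_iff₀ hk]
  linarith

theorem smin_le_min {k : ℝ} (hk : 0 < k) (a b : ℝ) : smin k a b ≤ min a b :=
  le_min (smin_le_left hk a b) (smin_comm k a b ▸ smin_le_left hk b a)

theorem sVal_le_eVal {X : Type*} (T : RTree X) (k : ℝ) (hk : 0 < k) (x : X) :
    sVal k T x ≤ eVal T x := by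
  induction T with
  | leaf g => exact le_rfl
  | maxN t₁ t₂ ih₁ ih₂ => exact max_le_max ih₁ ih₂
  | minN t₁ t₂ ih₁ ih₂ => exact (smin_le_min hk _ _).trans (min_le_min ih₁ ih₂)
end

section
/- For every robustness tree T over a type X, every real k > 0, every x ∈ X and every s ∈ ℝ, if Dec_k(T, x, s) holds and s ≤ 0, then the exact (non-smoothed) value satisfies V(T, x) ≤ d(T)·(ln 2)/k. Hence any point feasible for the decomposed constraint system violates the exact reversed-robustness constraint V(T,x) ≤ 0 by at most d(T)·(ln 2)/k, an amount that tends to 0 as k → ∞. -/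
theorem min_sub_log_two_div_le_smin {k : ℝ} (hk : 0 < k) (a b : ℝ) :
    min a b - Real.log 2 / k ≤ smin k a b := by
  have hexp {c : ℝ} (hc : min a b ≤ c) : Real.exp (-k * c) ≤ Real.exp (-k * min a b) :=
    Real.exp_le_exp.2 (mul_le_mul_of_nonpos_left hc (neg_nonpos.2 hk.le))
  have hsum : Real.exp (-k * a) + Real.exp (-k * b) ≤ 2 * Real.exp (-k * min a b) := by
    linarith [hexp (min_le_left a b), hexp (min_le_right a b)]
  have hlog : Real.log (Real.exp (-k * a) + Real.exp (-k * b)) ≤ Real.log 2 - k * min a b :=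
    calc Real.log (Real.exp (-k * a) + Real.exp (-k * b))
        ≤ Real.log (2 * Real.exp (-k * min a b)) := Real.log_le_log (by positivity) hsum
      _ = Real.log 2 - k * min a b := by
        rw [Real.log_mul two_ne_zero (Real.exp_ne_zero _), Real.log_exp]; ring
  calc min a b - Real.log 2 / k = -(1 / k) * (Real.log 2 - k * min a b) := by
        field_simp; ring
    _ ≤ smin k a b := mul_le_mul_of_nonpos_left hlog (neg_nonpos.2 (one_div_nonneg.2 hk.le))

theorem eVal_le_of_dec {X : Type*} {k : ℝ} (hk : 0 < k) {T : RTree X} {x : X} {s : ℝ}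
    (h : Dec k T x s) : eVal T x ≤ s + mdepth T * (Real.log 2 / k) := by
  have hc : 0 ≤ Real.log 2 / k := div_nonneg (Real.log_nonneg one_le_two) hk.le
  induction T generalizing s with
  | leaf g => simpa [Dec, eVal, mdepth] using h
  | maxN t₁ t₂ ih₁ ih₂ =>
    obtain ⟨h₁, h₂⟩ := h
    simp only [eVal, mdepth, Nat.cast_max]
    refine max_le ((ih₁ h₁).trans ?_) ((ih₂ h₂).trans ?_)
    · gcongr; exact le_max_left _ _
    · gcongr; exact le_max_right _ _
  | minN t₁ t₂ ih₁ ih₂ =>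
    obtain ⟨s₁, s₂, h₁, h₂, hs⟩ := h
    simp only [eVal, mdepth, Nat.cast_add, Nat.cast_one, Nat.cast_max]
    set d := max (mdepth t₁ : ℝ) (mdepth t₂)
    have hval : min (eVal t₁ x) (eVal t₂ x) ≤ min s₁ s₂ + d * (Real.log 2 / k) := by
      rw [← min_add_add_right]
      refine min_le_min ((ih₁ h₁).trans ?_) ((ih₂ h₂).trans ?_)
      · gcongr; exact le_max_left _ _
      · gcongr; exact le_max_right _ _
    linarith [min_sub_log_two_div_le_smin hk s₁ s₂]

theorem dec_implies_exact_violation_bound {X : Type*} (T : RTree X) (k : ℝ) (hk : 0 < k)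
    (x : X) (s : ℝ) (hdec : Dec k T x s) (hs : s ≤ 0) :
    eVal T x ≤ (mdepth T : ℝ) * Real.log 2 / k := by
  rw [mul_div_assoc]
  linarith [eVal_le_of_dec hk hdec]
end
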